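/- arXiv:2311.06764 — 2 statements merged into one kernel-verified Lean document; each statement's English description precedes it below -/
import Mathlib

section
/- Let P and Q be positive operators and R a bounded operator on a Hilbert space H. The block operator [[P, R], [R*, Q]] on H ⊕ H is positive if and only if there exists a contraction K on H with R = P^{1/2} K Q^{1/2}. -/
variable {H : Type*} [NormedAddCommGroup H] [InnerProductSpace ℂ H] [CompleteSpace H]

/-- The 2×2 block operator `[[A, B], [C, D]]` acting on the Hilbert space direct sum
`H ⊕ H` (realized as `WithLp 2 (H × H)`) by `(h₁, h₂) ↦ (A h₁ + B h₂, C h₁ + D h₂)`. -/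
noncomputable def blk (A B C D : H →L[ℂ] H) :
    WithLp 2 (H × H) →L[ℂ] WithLp 2 (H × H) :=
  (WithLp.prodContinuousLinearEquiv 2 ℂ H H).symm.toContinuousLinearMap.comp
    (((A.comp (ContinuousLinearMap.fst ℂ H H) + B.comp (ContinuousLinearMap.snd ℂ H H)).prod
      (C.comp (ContinuousLinearMap.fst ℂ H H) + D.comp (ContinuousLinearMap.snd ℂ H H))).comp
      (WithLp.prodContinuousLinearEquiv 2 ℂ H H).toContinuousLinearMap)

/-!
Write `P = sP²` and `Q = sQ²`. At `(x, y)` the quadratic form of the block operator is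
`‖sP x‖² + ‖sQ y‖² + 2 Re ⟪R y, x⟫`; rotating and rescaling `x` shows that it is nonnegative
exactly when `‖⟪R y, x⟫‖ ≤ ‖sP x‖ ‖sQ y‖` for all `x, y`. By Hahn–Banach and Riesz such a bound
factors `R = sP T` with `‖T y‖ ≤ ‖sQ y‖` (Douglas' lemma), and factoring `T†` through `sQ` in the
same way gives `T = K sQ` with `‖K‖ ≤ 1`.
-/
open ContinuousLinearMap
open scoped InnerProduct InnerProductSpace

theorem LinearMap.exists_strongDual_comp_eq_of_norm_le {𝕜 E F : Type*} [RCLike 𝕜]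
    [AddCommGroup E] [Module 𝕜 E] [NormedAddCommGroup F] [NormedSpace 𝕜 F]
    (T : E →ₗ[𝕜] F) (g : E →ₗ[𝕜] 𝕜) {c : ℝ} (hc : 0 ≤ c) (h : ∀ x, ‖g x‖ ≤ c * ‖T x‖) :
    ∃ φ : StrongDual 𝕜 F, (φ : F →ₗ[𝕜] 𝕜) ∘ₗ T = g ∧ ‖φ‖ ≤ c := by
  obtain ⟨S, hS⟩ := T.rangeRestrict.exists_rightInverse_of_surjective T.range_rangeRestrict
  have hTS (u : LinearMap.range T) : T (S u) = u := congrArg Subtype.val (LinearMap.congr_fun hS u)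
  have hgS (x : E) : g (S ⟨T x, x, rfl⟩) = g x := by
    have := h (S ⟨T x, x, rfl⟩ - x)
    rwa [map_sub, map_sub, hTS, sub_self, norm_zero, mul_zero, norm_le_zero_iff,
      sub_eq_zero] at this
  let φ₀ : StrongDual 𝕜 (LinearMap.range T) :=
    (g ∘ₗ S).mkContinuous c fun u ↦ (h (S u)).trans_eq <| by rw [hTS]; rfl
  obtain ⟨φ, hφ, hφ_norm⟩ := exists_extension_norm_eq _ φ₀
  refine ⟨φ, LinearMap.ext fun x ↦ (hφ ⟨T x, x, rfl⟩).trans (hgS x), ?_⟩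
  exact hφ_norm ▸ LinearMap.mkContinuous_norm_le _ hc _

theorem ContinuousLinearMap.eq_of_mem_orthogonal_ker {𝕜 E F : Type*} [RCLike 𝕜]
    [NormedAddCommGroup E] [InnerProductSpace 𝕜 E] [NormedAddCommGroup F] [NormedSpace 𝕜 F]
    (A : E →L[𝕜] F) {z₁ z₂ : E} (h₁ : z₁ ∈ A.kerᗮ) (h₂ : z₂ ∈ A.kerᗮ)
    (h : A z₁ = A z₂) : z₁ = z₂ :=
  sub_eq_zero.1 <| Submodule.disjoint_def.1 A.ker.orthogonal_disjoint _
    (by simp [LinearMap.mem_ker, h]) (sub_mem h₁ h₂)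

variable {G : Type*} [NormedAddCommGroup G] [InnerProductSpace ℂ G] [CompleteSpace G]

theorem ContinuousLinearMap.exists_mem_orthogonal_ker_apply_eq (A : G →L[ℂ] H) (v : H) {c : ℝ}
    (hc : 0 ≤ c) (h : ∀ x, ‖⟪v, x⟫_ℂ‖ ≤ c * ‖(A†) x‖) : ∃ z ∈ A.kerᗮ, A z = v ∧ ‖z‖ ≤ c := by
  obtain ⟨φ, hφ, hφ_norm⟩ :=
    (A† : H →ₗ[ℂ] G).exists_strongDual_comp_eq_of_norm_le (innerₛₗ ℂ v) hc h
  set z₀ := (InnerProductSpace.toDual ℂ G).symm φ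
  have hAz₀ : A z₀ = v := ext_inner_right ℂ fun x ↦ by
    rw [← adjoint_inner_right, InnerProductSpace.toDual_symm_apply]
    exact LinearMap.congr_fun hφ x
  refine ⟨A.kerᗮ.starProjection z₀, A.kerᗮ.starProjection_apply_mem z₀, ?_, ?_⟩
  · rw [Submodule.starProjection_orthogonal_val, map_sub, hAz₀, sub_eq_self]
    exact A.ker.starProjection_apply_mem z₀
  · calc ‖A.kerᗮ.starProjection z₀‖ ≤ ‖z₀‖ := Submodule.norm_starProjection_apply_le _ _
      _ = ‖φ‖ := LinearIsometryEquiv.norm_map _ _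
      _ ≤ c := hφ_norm

theorem ContinuousLinearMap.exists_comp_eq_of_norm_inner_le {E F : Type*} [NormedAddCommGroup E]
    [NormedSpace ℂ E] [NormedAddCommGroup F] [NormedSpace ℂ F]
    (A : G →L[ℂ] H) (B : E →L[ℂ] H) (C : E →L[ℂ] F)
    (h : ∀ x y, ‖⟪B y, x⟫_ℂ‖ ≤ ‖C y‖ * ‖(A†) x‖) :
    ∃ T : E →L[ℂ] G, A ∘L T = B ∧ ∀ y, ‖T y‖ ≤ ‖C y‖ := by
  choose T hT_mem hAT hT_le using fun y ↦
    A.exists_mem_orthogonal_ker_apply_eq (B y) (norm_nonneg (C y)) (h · y)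
  have hT_eq {y : E} {z : G} (hz : z ∈ A.kerᗮ) (hAz : A z = B y) : T y = z :=
    A.eq_of_mem_orthogonal_ker (hT_mem y) hz ((hAT y).trans hAz.symm)
  let T' : E →ₗ[ℂ] G :=
    { toFun := T
      map_add' := fun y y' ↦ hT_eq (add_mem (hT_mem y) (hT_mem y')) (by simp [hAT])
      map_smul' := fun a y ↦ hT_eq (Submodule.smul_mem _ a (hT_mem y)) (by simp [hAT]) }
  exact ⟨T'.mkContinuous ‖C‖ fun y ↦ (hT_le y).trans (C.le_opNorm y), ext hAT, hT_le⟩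

theorem exists_contraction_eq_comp_comp_iff {E : Type*} [NormedAddCommGroup E]
    [InnerProductSpace ℂ E] [CompleteSpace E] (R : E →L[ℂ] G) {sP : G →L[ℂ] G} {sQ : E →L[ℂ] E}
    (hsP : IsSelfAdjoint sP) (hsQ : IsSelfAdjoint sQ) :
    (∃ K : E →L[ℂ] G, ‖K‖ ≤ 1 ∧ R = sP ∘L K ∘L sQ) ↔
      ∀ x y, ‖⟪R y, x⟫_ℂ‖ ≤ ‖sP x‖ * ‖sQ y‖ := by
  constructor
  · rintro ⟨K, hK, rfl⟩ x y
    calc ‖⟪sP (K (sQ y)), x⟫_ℂ‖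
        = ‖⟪K (sQ y), sP x⟫_ℂ‖ := by rw [← adjoint_inner_right, hsP.adjoint_eq]
      _ ≤ ‖K (sQ y)‖ * ‖sP x‖ := norm_inner_le_norm _ _
      _ ≤ ‖sP x‖ * ‖sQ y‖ := by
        rw [mul_comm]; gcongr; exact K.le_of_opNorm_le hK _ |>.trans_eq (one_mul _)
  · intro h
    obtain ⟨T, hT, hT_le⟩ := sP.exists_comp_eq_of_norm_inner_le R sQ fun x y ↦ by
      rw [hsP.adjoint_eq, mul_comm]; exact h x y
    obtain ⟨S, hS, hS_le⟩ := sQ.exists_comp_eq_of_norm_inner_le (T†) (.id ℂ G) fun y w ↦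
      calc ‖⟪(T†) w, y⟫_ℂ‖ = ‖⟪w, T y⟫_ℂ‖ := by rw [adjoint_inner_left]
        _ ≤ ‖w‖ * ‖T y‖ := norm_inner_le_norm _ _
        _ ≤ ‖w‖ * ‖(sQ†) y‖ := by rw [hsQ.adjoint_eq]; gcongr; exact hT_le y
    refine ⟨S†, ?_, ?_⟩
    · rw [adjoint.norm_map]
      exact S.opNorm_le_bound zero_le_one fun w ↦ (hS_le w).trans_eq (one_mul _).symm
    · rw [← hT, ← adjoint_adjoint T, ← hS, adjoint_comp, hsQ.adjoint_eq]

theorem RCLike.norm_le_mul_of_forall_nonneg {𝕜 : Type*} [RCLike 𝕜] {r : 𝕜} {a b : ℝ}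
    (ha : 0 ≤ a) (hb : 0 ≤ b) (h : ∀ c : 𝕜, 0 ≤ ‖c‖ ^ 2 * a ^ 2 + b ^ 2 + 2 * re (c * r)) :
    ‖r‖ ≤ a * b := by
  obtain ⟨u, hu, hur⟩ := RCLike.exists_norm_eq_mul_self r
  have hquad (t : ℝ) : 0 ≤ a ^ 2 * (t * t) + (-2 * ‖r‖) * t + b ^ 2 := by
    have hc : ‖-(t : 𝕜) * u‖ ^ 2 = t * t := by simp [hu, sq]
    have hre : re (-(t : 𝕜) * u * r) = -(t * ‖r‖) := by
      rw [mul_assoc, ← hur, ← RCLike.ofReal_neg, ← RCLike.ofReal_mul, RCLike.ofReal_re, neg_mul]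
    have := h (-(t : 𝕜) * u)
    rw [hc, hre] at this
    linarith
  have hdisc := discrim_le_zero hquad
  rw [discrim] at hdisc
  nlinarith [norm_nonneg r, mul_nonneg ha hb]

omit [CompleteSpace H] in
theorem inner_blk_apply (A B C D : H →L[ℂ] H) (v w : WithLp 2 (H × H)) :
    ⟪blk A B C D v, w⟫_ℂ = ⟪A v.fst + B v.snd, w.fst⟫_ℂ + ⟪C v.fst + D v.snd, w.snd⟫_ℂ :=
  rfl

omit [CompleteSpace H] in
theorem inner_blk_apply_right (A B C D : H →L[ℂ] H) (v w : WithLp 2 (H × H)) :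
    ⟪v, blk A B C D w⟫_ℂ = ⟪v.fst, A w.fst + B w.snd⟫_ℂ + ⟪v.snd, C w.fst + D w.snd⟫_ℂ :=
  rfl

theorem adjoint_blk (A B C D : H →L[ℂ] H) : (blk A B C D)† = blk (A†) (C†) (B†) (D†) := by
  refine ((eq_adjoint_iff _ _).2 fun v w ↦ ?_).symm
  simp only [inner_blk_apply, inner_blk_apply_right, inner_add_left, inner_add_right,
    adjoint_inner_left]
  ring

theorem isSelfAdjoint_blk {P Q : H →L[ℂ] H} (hP : IsSelfAdjoint P) (hQ : IsSelfAdjoint Q)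
    (R : H →L[ℂ] H) : IsSelfAdjoint (blk P R (R†) Q) := by
  rw [isSelfAdjoint_iff', adjoint_blk, adjoint_adjoint, hP.adjoint_eq, hQ.adjoint_eq]

theorem re_inner_blk_self (P Q R : H →L[ℂ] H) (v : WithLp 2 (H × H)) :
    RCLike.re ⟪blk P R (R†) Q v, v⟫_ℂ = RCLike.re ⟪P v.fst, v.fst⟫_ℂ +
      RCLike.re ⟪Q v.snd, v.snd⟫_ℂ + 2 * RCLike.re ⟪R v.snd, v.fst⟫_ℂ := by
  simp only [inner_blk_apply, inner_add_left, map_add, adjoint_inner_left]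
  rw [inner_re_symm v.fst]
  ring

theorem blk_mul_self_isPositive_iff (R : H →L[ℂ] H) {sP sQ : H →L[ℂ] H}
    (hsP : IsSelfAdjoint sP) (hsQ : IsSelfAdjoint sQ) :
    (blk (sP * sP) R (R†) (sQ * sQ)).IsPositive ↔
      ∀ x y, ‖⟪R y, x⟫_ℂ‖ ≤ ‖sP x‖ * ‖sQ y‖ := by
  have hnorm_sq {S : H →L[ℂ] H} (hS : IsSelfAdjoint S) (x : H) :
      RCLike.re ⟪(S * S) x, x⟫_ℂ = ‖S x‖ ^ 2 := by
    rw [apply_norm_sq_eq_inner_adjoint_left, hS.adjoint_eq]; rfl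
  have hself : IsSelfAdjoint (blk (sP * sP) R (R†) (sQ * sQ)) :=
    isSelfAdjoint_blk (sq sP ▸ hsP.pow 2) (sq sQ ▸ hsQ.pow 2) R
  simp only [isPositive_def', hself, true_and, reApplyInnerSelf_apply, re_inner_blk_self,
    hnorm_sq hsP, hnorm_sq hsQ]
  constructor
  · intro h x y
    refine RCLike.norm_le_mul_of_forall_nonneg (norm_nonneg _) (norm_nonneg _) fun c ↦ ?_
    simpa [norm_smul, mul_pow, inner_smul_right] using h (WithLp.toLp 2 (c • x, y))
  · intro h v
    have hre := (abs_le.1 (RCLike.abs_re_le_norm ⟪R v.snd, v.fst⟫_ℂ)).1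
    nlinarith [h v.fst v.snd, sq_nonneg (‖sP v.fst‖ - ‖sQ v.snd‖)]

theorem stmt_7_general (P Q R sP sQ : H →L[ℂ] H)
    (hsP : sP.IsPositive) (hsP2 : sP * sP = P)
    (hsQ : sQ.IsPositive) (hsQ2 : sQ * sQ = Q) :
    (blk P R (ContinuousLinearMap.adjoint R) Q).IsPositive ↔
      ∃ K : H →L[ℂ] H, ‖K‖ ≤ 1 ∧ R = sP * K * sQ := by
  subst hsP2 hsQ2
  rw [blk_mul_self_isPositive_iff R hsP.isSelfAdjoint hsQ.isSelfAdjoint,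
    ← exists_contraction_eq_comp_comp_iff R hsP.isSelfAdjoint hsQ.isSelfAdjoint]
  rfl

theorem stmt_7 (P Q R sP sQ : H →L[ℂ] H) (hP : P.IsPositive) (hQ : Q.IsPositive)
    (hsP : sP.IsPositive) (hsP2 : sP * sP = P)
    (hsQ : sQ.IsPositive) (hsQ2 : sQ * sQ = Q) :
    (blk P R (ContinuousLinearMap.adjoint R) Q).IsPositive ↔
      ∃ K : H →L[ℂ] H, ‖K‖ ≤ 1 ∧ R = sP * K * sQ :=
  stmt_7_general P Q R sP sQ hsP hsP2 hsQ hsQ2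
end

section
/- Let T, X be commuting bounded operators on a Hilbert space H and set T_X = [[T, X], [0, T]]. If p, q are polynomials with q(T) invertible, then p(T_X) q(T_X)⁻¹ = [[f(T), X f'(T)], [0, f(T)]], where f(T) = p(T) q(T)⁻¹ and f'(T) = p'(T) q(T)⁻¹ − p(T) q(T)⁻² q'(T). -/
/-! The upper-triangular blocks `[[A, X A'], [0, A]]` with `A` commuting with `X` multiply by the
Leibniz rule, so `aeval T_X r` carries `X r'(T)` in its corner. Together with the explicit inverse
`[[Q⁻¹, -Q⁻¹ B Q⁻¹], [0, Q⁻¹]]` of `[[Q, B], [0, Q]]`, this gives the quotient rule for `p q⁻¹`. -/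

variable {H : Type*} [NormedAddCommGroup H] [InnerProductSpace ℂ H] [CompleteSpace H]

open Polynomial

theorem Commute.ringInverse_right {M₀ : Type*} [MonoidWithZero M₀] {a b : M₀}
    (h : Commute a b) : Commute a (Ring.inverse b) := by
  by_cases hb : IsUnit b
  · obtain ⟨u, rfl⟩ := hb
    rw [Ring.inverse_unit]
    exact h.units_inv_right
  · rw [Ring.inverse_non_unit b hb]
    exact Commute.zero_right a

theorem Polynomial.commute_aeval_left {R A : Type*} [CommSemiring R] [Semiring A] [Algebra R A]
    {x y : A} (h : Commute x y) (r : R[X]) : Commute (aeval x r) y :=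
  aeval_eq_smeval x r ▸ smeval_commute_left R r h

section Blocks

variable {E : Type*} [NormedAddCommGroup E] [InnerProductSpace ℂ E]

theorem blk_apply (A B C D : E →L[ℂ] E) (x : WithLp 2 (E × E)) :
    blk A B C D x = WithLp.toLp 2 (A x.fst + B x.snd, C x.fst + D x.snd) := rfl

theorem blk_mul (A B C D A' B' C' D' : E →L[ℂ] E) :
    blk A B C D * blk A' B' C' D' =
      blk (A * A' + B * C') (A * B' + B * D') (C * A' + D * C') (C * B' + D * D') := by
  ext x : 1
  simp [blk_apply, WithLp.ext_iff, Prod.ext_iff]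
  constructor <;> abel

theorem blk_add (A B C D A' B' C' D' : E →L[ℂ] E) :
    blk A B C D + blk A' B' C' D' = blk (A + A') (B + B') (C + C') (D + D') := by
  ext x : 1
  simp [blk_apply, WithLp.ext_iff, Prod.ext_iff]
  constructor <;> abel

theorem blk_algebraMap (c : ℂ) :
    blk (algebraMap ℂ (E →L[ℂ] E) c) 0 0 (algebraMap ℂ _ c) = algebraMap ℂ _ c := by
  ext x : 1
  simp [blk_apply, WithLp.ext_iff, Prod.ext_iff, Algebra.algebraMap_eq_smul_one]

theorem blk_one : blk (1 : E →L[ℂ] E) 0 0 1 = 1 := by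
  simpa using blk_algebraMap (E := E) 1

theorem ringInverse_blk_upperTriangular {Q : E →L[ℂ] E} (hQ : IsUnit Q) (B : E →L[ℂ] E) :
    Ring.inverse (blk Q B 0 Q) =
      blk (Ring.inverse Q) (-(Ring.inverse Q * B * Ring.inverse Q)) 0 (Ring.inverse Q) := by
  set Qi := Ring.inverse Q
  have hQQi : Q * Qi = 1 := Ring.mul_inverse_cancel Q hQ
  have hQiQ : Qi * Q = 1 := Ring.inverse_mul_cancel Q hQ
  have right : blk Q B 0 Q * blk Qi (-(Qi * B * Qi)) 0 Qi = 1 := by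
    rw [blk_mul, ← blk_one]
    congr 1 <;> simp [hQQi, ← mul_assoc]
  have left : blk Qi (-(Qi * B * Qi)) 0 Qi * blk Q B 0 Q = 1 := by
    rw [blk_mul, ← blk_one]
    congr 1 <;> simp [hQiQ, mul_assoc]
  exact Ring.inverse_unit ⟨_, _, right, left⟩

theorem blk_mul_blk_of_commute {X A : E →L[ℂ] E} (hA : Commute A X) (A' B B' : E →L[ℂ] E) :
    blk A (X * A') 0 A * blk B (X * B') 0 B = blk (A * B) (X * (A' * B + A * B')) 0 (A * B) := by
  rw [blk_mul]
  simp only [mul_zero, zero_mul, add_zero, zero_add]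
  rw [hA.left_comm, mul_add, mul_assoc, add_comm]

theorem aeval_blk {T X : E →L[ℂ] E} (hc : Commute T X) (r : ℂ[X]) :
    aeval (blk T X 0 T) r = blk (aeval T r) (X * aeval T (derivative r)) 0 (aeval T r) := by
  induction r using Polynomial.induction_on with
  | C a => simp [blk_algebraMap]
  | add f g hf hg => simp only [map_add, hf, hg, mul_add, blk_add, add_zero]
  | monomial n a ih =>
    have hX : aeval (blk T X 0 T) (Polynomial.X : ℂ[X]) =
        blk (aeval T (Polynomial.X : ℂ[X])) (X * aeval T (derivative (Polynomial.X : ℂ[X]))) 0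
          (aeval T (Polynomial.X : ℂ[X])) := by
      simp
    rw [pow_succ, ← mul_assoc, map_mul, ih, hX, blk_mul_blk_of_commute (commute_aeval_left hc _)]
    simp only [← map_mul, ← map_add, ← derivative_mul]

end Blocks

theorem stmt_19 (T X : H →L[ℂ] H) (hc : T * X = X * T) (p q : Polynomial ℂ)
    (hq : IsUnit (Polynomial.aeval T q)) :
    Polynomial.aeval (blk T X 0 T) p * Ring.inverse (Polynomial.aeval (blk T X 0 T) q) =
      blk (Polynomial.aeval T p * Ring.inverse (Polynomial.aeval T q))
        (X * (Polynomial.aeval T (Polynomial.derivative p) * Ring.inverse (Polynomial.aeval T q) -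
          Polynomial.aeval T p * (Ring.inverse (Polynomial.aeval T q)) ^ 2 *
            Polynomial.aeval T (Polynomial.derivative q)))
        0 (Polynomial.aeval T p * Ring.inverse (Polynomial.aeval T q)) := by
  set Qi := Ring.inverse (aeval T q)
  have hQiX : Commute Qi X := (commute_aeval_left hc q).symm.ringInverse_right.symm
  have hQ'Qi : Commute (aeval T (derivative q)) Qi :=
    (commute_aeval_left (commute_aeval_left (Commute.refl T) q).symm _).ringInverse_right
  have hB :
      -(Qi * (X * aeval T (derivative q)) * Qi) = X * -(Qi ^ 2 * aeval T (derivative q)) := by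
    rw [hQiX.left_comm, mul_assoc, mul_assoc, hQ'Qi.eq, ← mul_assoc Qi, ← sq, mul_neg]
  rw [aeval_blk hc p, aeval_blk hc q, ringInverse_blk_upperTriangular hq, hB,
    blk_mul_blk_of_commute (commute_aeval_left hc p), mul_neg, ← sub_eq_add_neg, mul_assoc]
end
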